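/- arXiv:1906.02310 — 11 statements merged into one kernel-verified Lean document; each statement's English description precedes it below -/
import Mathlib

section
/- Given a split extension of unitary magmas (X, A, B, κ, λ, α, β), the map φ : A → X ⋊ B defined by φ(a) = (λ(a), α(a)) and the map ψ : X ⋊ B → A defined by ψ(x,b) = κ(x) + β(b) are mutually inverse bijections, where X ⋊ B carries the action b·x = λ(β(b) + κ(x)). -/
/-- Semidirect product addition on `X × B` for an action `act : B → X → X`. -/
def sadd {X B : Type*} [AddZeroClass X] [AddZeroClass B]
    (act : B → X → X) (p q : X × B) : X × B :=
  (p.1 + act p.2 q.1, p.2 + q.2)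

/-- A split extension of unitary magmas `X → A ⇄ B` (Definition 1.4 of
Gran–Janelidze–Sobral): `kap`, `al`, `be` are magma homomorphisms, `lam`
preserves zero, and the equalities (11)-(17) hold. -/
structure SplitExt (X A B : Type*) [AddZeroClass X] [AddZeroClass A] [AddZeroClass B] where
  kap : X → A
  al : A → B
  be : B → A
  lam : A → X
  kap_zero : kap 0 = 0
  kap_add : ∀ x x', kap (x + x') = kap x + kap x'
  al_zero : al 0 = 0
  al_add : ∀ a a', al (a + a') = al a + al a'
  be_zero : be 0 = 0
  be_add : ∀ b b', be (b + b') = be b + be b'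
  lam_zero : lam 0 = 0
  lam_kap : ∀ x, lam (kap x) = x
  al_be : ∀ b, al (be b) = b
  lam_be : ∀ b, lam (be b) = 0
  al_kap : ∀ x, al (kap x) = 0
  split : ∀ a, kap (lam a) + be (al a) = a
  nondis : ∀ x b, lam (kap x + be b) = x
  assoc_left : ∀ x b a, kap x + (be b + a) = (kap x + be b) + a
  assoc_mid : ∀ x a b, kap x + (a + be b) = (kap x + a) + be b
  assoc_right : ∀ a x b, a + (kap x + be b) = (a + kap x) + be b

/-- The action of `B` on `X` associated to a split extension: `b·x = λ(β(b)+κ(x))`. -/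
def SplitExt.act {X A B : Type*} [AddZeroClass X] [AddZeroClass A] [AddZeroClass B]
    (E : SplitExt X A B) (b : B) (x : X) : X :=
  E.lam (E.be b + E.kap x)

theorem SplitExt.al_kap_add_be {X A B : Type*} [AddZeroClass X] [AddZeroClass A]
    [AddZeroClass B] (E : SplitExt X A B) (x : X) (b : B) : E.al (E.kap x + E.be b) = b := by
  rw [E.al_add, E.al_kap, E.al_be, zero_add]

/-- Lemma 1.6: the maps `φ(a) = (λ(a), α(a))` and `ψ(x,b) = κ(x)+β(b)` are
mutually inverse bijections between `A` and `X ⋊ B` (the latter carrying the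
associated action `b·x = λ(β(b)+κ(x))`). -/
theorem stmt4 {X A B : Type*} [AddZeroClass X] [AddZeroClass A] [AddZeroClass B]
    (E : SplitExt X A B) :
    (∀ a : A, E.kap (E.lam a, E.al a).1 + E.be (E.lam a, E.al a).2 = a) ∧
    (∀ p : X × B, ((E.lam (E.kap p.1 + E.be p.2), E.al (E.kap p.1 + E.be p.2)) : X × B) = p) :=
  ⟨E.split, fun p => Prod.ext (E.nondis p.1 p.2) (E.al_kap_add_be p.1 p.2)⟩
end

section
/- Given a split extension of unitary magmas (X, A, B, κ, λ, α, β) with associated action b·x = λ(β(b)+κ(x)), the equality β(b) + κ(x) = κ(b·x) + β(b) holds for all b ∈ B and x ∈ X. -/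
theorem SplitExt.al_be_add_kap {X A B : Type*} [AddZeroClass X] [AddZeroClass A]
    [AddZeroClass B] (E : SplitExt X A B) (b : B) (x : X) : E.al (E.be b + E.kap x) = b := by
  rw [E.al_add, E.al_be, E.al_kap, add_zero]

/-- Lemma 1.7: `β(b) + κ(x) = κ(b·x) + β(b)`. -/
theorem stmt5 {X A B : Type*} [AddZeroClass X] [AddZeroClass A] [AddZeroClass B]
    (E : SplitExt X A B) :
    ∀ (b : B) (x : X), E.be b + E.kap x = E.kap (E.act b x) + E.be b := by
  intro b x
  have decomposition := E.split (E.be b + E.kap x)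
  rw [E.al_be_add_kap] at decomposition
  exact decomposition.symm
end

section
/- Given a split extension of unitary magmas (X, A, B, κ, λ, α, β), the map ψ : X ⋊ B → A defined by ψ(x,b) = κ(x)+β(b) is a magma homomorphism, where X ⋊ B carries the associated action b·x = λ(β(b)+κ(x)) and addition (x,b)+(x',b') = (x + b·x', b+b'). -/
namespace SplitExt

variable {X A B : Type*} [AddZeroClass X] [AddZeroClass A] [AddZeroClass B] (E : SplitExt X A B)

theorem al_be_add_kap_s7 (b : B) (x : X) : E.al (E.be b + E.kap x) = b := by
  rw [E.al_add, E.al_be, E.al_kap, add_zero]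

theorem kap_act_add_be (b : B) (x : X) : E.kap (E.act b x) + E.be b = E.be b + E.kap x := by
  have h := E.split (E.be b + E.kap x)
  rwa [E.al_be_add_kap_s7] at h

theorem kap_zero_add_be_zero : E.kap 0 + E.be 0 = 0 := by
  rw [E.kap_zero, E.be_zero, add_zero]

theorem kap_add_be_sadd (x x' : X) (b b' : B) :
    E.kap (x + E.act b x') + E.be (b + b') = (E.kap x + E.be b) + (E.kap x' + E.be b') :=
  calc E.kap (x + E.act b x') + E.be (b + b')
      = (E.kap (x + E.act b x') + E.be b) + E.be b' := by
        rw [E.be_add, E.assoc_left]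
    _ = (E.kap x + (E.kap (E.act b x') + E.be b)) + E.be b' := by
        rw [E.assoc_right, E.kap_add]
    _ = (E.kap x + (E.be b + E.kap x')) + E.be b' := by
        rw [E.kap_act_add_be]
    _ = (E.kap x + E.be b) + (E.kap x' + E.be b') := by
        rw [E.assoc_left, E.assoc_right]

end SplitExt

/-- Lemma 1.8: `ψ(x,b) = κ(x)+β(b)` is a magma homomorphism from
`X ⋊ B` (with the associated action) to `A`. -/
theorem stmt7 {X A B : Type*} [AddZeroClass X] [AddZeroClass A] [AddZeroClass B]
    (E : SplitExt X A B) :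
    (E.kap (0 : X) + E.be (0 : B) = 0) ∧
    (∀ p q : X × B,
      E.kap (sadd E.act p q).1 + E.be (sadd E.act p q).2 =
        (E.kap p.1 + E.be p.2) + (E.kap q.1 + E.be q.2)) :=
  ⟨E.kap_zero_add_be_zero, fun ⟨x, b⟩ ⟨x', b'⟩ => E.kap_add_be_sadd x x' b b'⟩
end

section
/- In a split extension of unitary magmas (X, A, B, κ, λ, α, β), the homomorphism κ is a kernel of α: κ is injective, ακ = 0, and for every magma homomorphism g : C → A with αg = 0 there exists a unique magma homomorphism g' : C → X with κg' = g. -/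
/-! On `ker α` the splitting identity `κλ(a) + βα(a) = a` reduces to `κλ(a) = a`, so there `λ`
is a two-sided inverse of `κ`. Hence `λ ∘ g` is additive whenever `αg = 0` and factors `g`
through `κ`, uniquely since `λκ = 1` makes `κ` injective. -/

namespace SplitExt

variable {X A B : Type*} [AddZeroClass X] [AddZeroClass A] [AddZeroClass B] (E : SplitExt X A B)

theorem lam_leftInverse_kap : Function.LeftInverse E.lam E.kap := E.lam_kap

theorem kap_injective : Function.Injective E.kap := E.lam_leftInverse_kap.injective

theorem kap_lam_of_al_eq_zero {a : A} (ha : E.al a = 0) : E.kap (E.lam a) = a := by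
  simpa only [ha, E.be_zero, add_zero] using E.split a

theorem lam_add_of_al_eq_zero {a a' : A} (ha : E.al a = 0) (ha' : E.al a' = 0) :
    E.lam (a + a') = E.lam a + E.lam a' := by
  conv_lhs => rw [← E.kap_lam_of_al_eq_zero ha, ← E.kap_lam_of_al_eq_zero ha', ← E.kap_add]
  exact E.lam_kap _

def kerLift {C : Type*} [AddZeroClass C] (g : C →+ A) (hg : ∀ c, E.al (g c) = 0) : C →+ X where
  toFun c := E.lam (g c)
  map_zero' := by rw [map_zero, E.lam_zero]
  map_add' c c' := by rw [map_add, E.lam_add_of_al_eq_zero (hg c) (hg c')]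

theorem kap_kerLift {C : Type*} [AddZeroClass C] (g : C →+ A) (hg : ∀ c, E.al (g c) = 0) (c : C) :
    E.kap (E.kerLift g hg c) = g c :=
  E.kap_lam_of_al_eq_zero (hg c)

end SplitExt

/-- Lemma 1.12(c): in a split extension, `κ` is a kernel of `α`: it is
injective, `ακ = 0`, and every magma homomorphism `g : C → A` with
`αg = 0` factors uniquely through `κ` by a magma homomorphism. -/
theorem stmt10 {X A B : Type*} [AddZeroClass X] [AddZeroClass A] [AddZeroClass B]
    (E : SplitExt X A B) :
    Function.Injective E.kap ∧
    (∀ x : X, E.al (E.kap x) = 0) ∧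
    (∀ (C : Type) [AddZeroClass C] (g : C → A),
      (g 0 = 0) → (∀ c c', g (c + c') = g c + g c') →
      (∀ c, E.al (g c) = 0) →
      ∃! g' : C → X,
        (g' 0 = 0 ∧ ∀ c c', g' (c + c') = g' c + g' c') ∧
        ∀ c, E.kap (g' c) = g c) := by
  refine ⟨E.kap_injective, E.al_kap, fun C _ g g_zero g_add hg => ?_⟩
  let g₀ : C →+ A := ⟨⟨g, g_zero⟩, g_add⟩
  let g' := E.kerLift g₀ hg
  refine ⟨g', ⟨⟨g'.map_zero, g'.map_add⟩, E.kap_kerLift g₀ hg⟩, fun h ⟨_, hkap⟩ => ?_⟩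
  funext c
  exact E.kap_injective ((hkap c).trans (E.kap_kerLift g₀ hg c).symm)
end

section
/- In a split extension of unitary magmas (X, A, B, κ, λ, α, β), the homomorphism α is a cokernel of κ: for every unitary magma C and magma homomorphism s : A → C with sκ = 0, the homomorphism t = sβ : B → C satisfies tα = s, and t is the unique magma homomorphism with this property. -/
namespace SplitExt

variable {X A B C : Type*} [AddZeroClass X] [AddZeroClass A] [AddZeroClass B]
  (E : SplitExt X A B) {s : A → C}

theorem map_zero_of_map_kap [Zero C] (hsk : ∀ x, s (E.kap x) = 0) : s 0 = 0 := by
  rw [← E.kap_zero, hsk]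

/-- Apply `s` to the splitting `a = κλ(a) + βα(a)`: the first summand is killed. -/
theorem map_be_al [AddZeroClass C] (hsadd : ∀ a a', s (a + a') = s a + s a')
    (hsk : ∀ x, s (E.kap x) = 0) (a : A) : s (E.be (E.al a)) = s a := by
  conv_rhs => rw [← E.split a, hsadd, hsk, zero_add]

theorem eq_comp_be_of_comp_al_eq {t : B → C} (ht : ∀ a, t (E.al a) = s a) : t = s ∘ E.be :=
  funext fun b => by rw [Function.comp_apply, ← ht, E.al_be]

end SplitExt

theorem stmt11_general {X A B : Type*} [AddZeroClass X] [AddZeroClass A] [AddZeroClass B]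
    (E : SplitExt X A B)
    {C : Type*} [AddZeroClass C] (s : A → C)
    (hsadd : ∀ a a', s (a + a') = s a + s a')
    (hsk : ∀ x : X, s (E.kap x) = 0) :
    (((s ∘ E.be) 0 = 0) ∧ (∀ b b', (s ∘ E.be) (b + b') = (s ∘ E.be) b + (s ∘ E.be) b')) ∧
    (∀ a : A, (s ∘ E.be) (E.al a) = s a) ∧
    (∀ t' : B → C,
      (t' 0 = 0) → (∀ b b', t' (b + b') = t' b + t' b') →
      (∀ a : A, t' (E.al a) = s a) → t' = s ∘ E.be) := by
  refine ⟨⟨?_, fun b b' => ?_⟩, E.map_be_al hsadd hsk,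
    fun t' _ _ ht => E.eq_comp_be_of_comp_al_eq ht⟩
  · rw [Function.comp_apply, E.be_zero, E.map_zero_of_map_kap hsk]
  · simp only [Function.comp_apply, E.be_add, hsadd]

/-- Lemma 1.12(d): in a split extension, `α` is a cokernel of `κ`: for any
magma homomorphism `s : A → C` with `sκ = 0`, the homomorphism `t = sβ`
satisfies `tα = s` and is the unique magma homomorphism with this property. -/
theorem stmt11 {X A B : Type*} [AddZeroClass X] [AddZeroClass A] [AddZeroClass B]
    (E : SplitExt X A B)
    {C : Type*} [AddZeroClass C] (s : A → C)
    (hs0 : s 0 = 0) (hsadd : ∀ a a', s (a + a') = s a + s a')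
    (hsk : ∀ x : X, s (E.kap x) = 0) :
    (((s ∘ E.be) 0 = 0) ∧ (∀ b b', (s ∘ E.be) (b + b') = (s ∘ E.be) b + (s ∘ E.be) b')) ∧
    (∀ a : A, (s ∘ E.be) (E.al a) = s a) ∧
    (∀ t' : B → C,
      (t' 0 = 0) → (∀ b b', t' (b + b') = t' b + t' b') →
      (∀ a : A, t' (E.al a) = s a) → t' = s ∘ E.be) :=
  stmt11_general E s hsadd hsk
end

section
/- Let (f,u,p) be a morphism of split extensions of unitary magmas from E = (B,X,A,α,β,κ,λ) to E' = (B',X',A',α',β',κ',λ'), where f, u, p are magma homomorphisms satisfying pκ = κ'u and pβ = β'f. Then automatically λ'p = uλ and α'p = fα. -/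
namespace SplitExt

variable {X A B : Type*} [AddZeroClass X] [AddZeroClass A] [AddZeroClass B]

theorem al_kap_add_be_s12 (E : SplitExt X A B) (x : X) (b : B) :
    E.al (E.kap x + E.be b) = b := by
  rw [E.al_add, E.al_kap, E.al_be, zero_add]

theorem map_eq_kap_add_be {X' A' B' : Type*} [AddZeroClass X'] [AddZeroClass A']
    [AddZeroClass B'] (E : SplitExt X A B) (E' : SplitExt X' A' B')
    {f : B → B'} {u : X → X'} {p : A → A'} (hpadd : ∀ a a', p (a + a') = p a + p a')
    (hpk : ∀ x, p (E.kap x) = E'.kap (u x)) (hpb : ∀ b, p (E.be b) = E'.be (f b)) (a : A) :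
    p a = E'.kap (u (E.lam a)) + E'.be (f (E.al a)) := by
  conv_lhs => rw [← E.split a]
  rw [hpadd, hpk, hpb]

end SplitExt

theorem stmt12_general {X A B X' A' B' : Type*}
    [AddZeroClass X] [AddZeroClass A] [AddZeroClass B]
    [AddZeroClass X'] [AddZeroClass A'] [AddZeroClass B']
    (E : SplitExt X A B) (E' : SplitExt X' A' B')
    (f : B → B') (u : X → X') (p : A → A')
    (hpadd : ∀ a a', p (a + a') = p a + p a')
    (hpk : ∀ x, p (E.kap x) = E'.kap (u x))
    (hpb : ∀ b, p (E.be b) = E'.be (f b)) :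
    (∀ a, E'.lam (p a) = u (E.lam a)) ∧ (∀ a, E'.al (p a) = f (E.al a)) := by
  have hp := E.map_eq_kap_add_be E' hpadd hpk hpb
  exact ⟨fun a => by rw [hp, E'.nondis], fun a => by rw [hp, E'.al_kap_add_be_s12]⟩

/-- Remark 2.2 (first half): for magma homomorphisms `f, u, p` between split
extensions, `pκ = κ'u` and `pβ = β'f` imply `λ'p = uλ` and `α'p = fα`. -/
theorem stmt12 {X A B X' A' B' : Type*}
    [AddZeroClass X] [AddZeroClass A] [AddZeroClass B]
    [AddZeroClass X'] [AddZeroClass A'] [AddZeroClass B']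
    (E : SplitExt X A B) (E' : SplitExt X' A' B')
    (f : B → B') (u : X → X') (p : A → A')
    (hf0 : f 0 = 0) (hfadd : ∀ b b', f (b + b') = f b + f b')
    (hu0 : u 0 = 0) (huadd : ∀ x x', u (x + x') = u x + u x')
    (hp0 : p 0 = 0) (hpadd : ∀ a a', p (a + a') = p a + p a')
    (hpk : ∀ x, p (E.kap x) = E'.kap (u x))
    (hpb : ∀ b, p (E.be b) = E'.be (f b)) :
    (∀ a, E'.lam (p a) = u (E.lam a)) ∧ (∀ a, E'.al (p a) = f (E.al a)) :=
  stmt12_general E E' f u p hpadd hpk hpb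
end

section
/- Let E = (B,X,A,α,β,κ,λ) and E' = (B',X',A',α',β',κ',λ') be split extensions of unitary magmas with associated actions, and let f : B → B', u : X → X' be magma homomorphisms satisfying u(b·x) = f(b)·u(x) for all b ∈ B, x ∈ X. Then the map p : A → A' defined by p(a) = κ'(u(λ(a))) + β'(f(α(a))) is a magma homomorphism satisfying pκ = κ'u and pβ = β'f. -/
/-! Every element decomposes as `a = κ(λ a) + β(α a)`, and the partial associativity laws
suffice to compute the sum of two such normal forms: `(κx + βb) + (κx' + βb') = κ(x + b·x') + β(b + b')`.
So `A` is the semidirect product of `X` and `B`, and `p` is the map induced on semidirect products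
by the equivariant pair `(u, f)`. -/

namespace SplitExt

variable {X A B : Type*} [AddZeroClass X] [AddZeroClass A] [AddZeroClass B]
  (E : SplitExt X A B)

theorem be_add_kap (b : B) (x : X) : E.be b + E.kap x = E.kap (E.act b x) + E.be b := by
  have hal : E.al (E.be b + E.kap x) = b := by rw [E.al_add, E.al_be, E.al_kap, add_zero]
  have := (E.split (E.be b + E.kap x)).symm
  rwa [hal] at this

theorem kap_add_be_add_kap_add_be (x x' : X) (b b' : B) :
    (E.kap x + E.be b) + (E.kap x' + E.be b') = E.kap (x + E.act b x') + E.be (b + b') :=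
  calc (E.kap x + E.be b) + (E.kap x' + E.be b')
      = (E.kap x + (E.be b + E.kap x')) + E.be b' := by rw [E.assoc_right, E.assoc_left]
    _ = ((E.kap x + E.kap (E.act b x')) + E.be b) + E.be b' := by
        rw [E.be_add_kap, E.assoc_mid]
    _ = E.kap (x + E.act b x') + E.be (b + b') := by
        rw [← E.kap_add, ← E.assoc_mid, ← E.be_add]

theorem add_eq_kap_add_be (a a' : A) :
    a + a' = E.kap (E.lam a + E.act (E.al a) (E.lam a')) + E.be (E.al a + E.al a') := by
  conv_lhs => rw [← E.split a, ← E.split a']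
  exact E.kap_add_be_add_kap_add_be _ _ _ _

theorem lam_add (a a' : A) : E.lam (a + a') = E.lam a + E.act (E.al a) (E.lam a') := by
  rw [E.add_eq_kap_add_be, E.nondis]

end SplitExt

/-- Lemma 2.5, (c) ⇒ (a): given magma homomorphisms `f : B → B'`, `u : X → X'`
equivariant for the associated actions, the map `p(a) = κ'(u(λ(a))) + β'(f(α(a)))`
is a magma homomorphism with `pκ = κ'u` and `pβ = β'f`. -/
theorem stmt15 {X A B X' A' B' : Type*}
    [AddZeroClass X] [AddZeroClass A] [AddZeroClass B]
    [AddZeroClass X'] [AddZeroClass A'] [AddZeroClass B']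
    (E : SplitExt X A B) (E' : SplitExt X' A' B')
    (f : B → B') (u : X → X')
    (hf0 : f 0 = 0) (hfadd : ∀ b b', f (b + b') = f b + f b')
    (hu0 : u 0 = 0) (huadd : ∀ x x', u (x + x') = u x + u x')
    (hequiv : ∀ (b : B) (x : X), u (E.act b x) = E'.act (f b) (u x)) :
    let p : A → A' := fun a => E'.kap (u (E.lam a)) + E'.be (f (E.al a))
    (p 0 = 0) ∧ (∀ a a', p (a + a') = p a + p a') ∧
    (∀ x, p (E.kap x) = E'.kap (u x)) ∧ (∀ b, p (E.be b) = E'.be (f b)) := by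
  refine ⟨?_, fun a a' => ?_, fun x => ?_, fun b => ?_⟩
  · simp only [E.lam_zero, E.al_zero, hu0, hf0, E'.kap_zero, E'.be_zero, add_zero]
  · simp only [E.lam_add, E.al_add, huadd, hequiv, hfadd, E'.kap_add_be_add_kap_add_be]
  · simp only [E.lam_kap, E.al_kap, hf0, E'.be_zero, add_zero]
  · simp only [E.lam_be, E.al_be, hu0, E'.kap_zero, zero_add]
end

section
/- Let D act on a unitary magma Y and let Y ⋊ D act on a unitary magma X. The partial associativity identity (x,(y,0)) + ((0,(0,d)) + (x',(y',d'))) = ((x,(y,0)) + (0,(0,d))) + (x',(y',d')) holds in X ⋊ (Y ⋊ D) for all x,x' ∈ X, y,y' ∈ Y, d,d' ∈ D if and only if (y,0)·((0,d)·x) = (y,d)·x for all x ∈ X, y ∈ Y, d ∈ D. -/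
/-- Addition on the semidirect product `Y ⋊ D` for an action `actD : D → Y → Y`. -/
def addYD {Y D : Type*} [AddZeroClass Y] [AddZeroClass D]
    (actD : D → Y → Y) (p q : Y × D) : Y × D :=
  (p.1 + actD p.2 q.1, p.2 + q.2)

/-- Addition on the iterated semidirect product `X ⋊ (Y ⋊ D)`, for an action
`actW : (Y × D) → X → X` of `Y ⋊ D` on `X`. -/
def addXW {X Y D : Type*} [AddZeroClass X] [AddZeroClass Y] [AddZeroClass D]
    (actD : D → Y → Y) (actW : Y × D → X → X) (p q : X × (Y × D)) : X × (Y × D) :=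
  (p.1 + actW p.2 q.1, addYD actD p.2 q.2)

/-!
On the right, `(x,(y,0)) + (0,(0,d))` collapses to `(x,(y,d))` because `b·0 = 0`, so the two sides
differ only in their first components `x + (y,0)·((0,d)·x')` and `x + (y,d)·x'`. No cancellation
is available in a magma, but taking `x = 0` isolates the action identity.
-/

section

variable {X Y D : Type*} [AddZeroClass X] [AddZeroClass Y] [AddZeroClass D]
  (actD : D → Y → Y) (actW : Y × D → X → X)

theorem addXW_addXW_right (hD0 : ∀ y : Y, actD 0 y = y) (x x' : X) (y y' : Y) (d d' : D) :
    addXW actD actW (x, (y, 0)) (addXW actD actW (0, (0, d)) (x', (y', d'))) =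
      (x + actW (y, 0) (actW (0, d) x'), (y + actD d y', d + d')) := by
  simp only [addXW, addYD, hD0, zero_add]

theorem addXW_addXW_left (hD0 : ∀ y : Y, actD 0 y = y) (hW0' : ∀ w : Y × D, actW w 0 = 0)
    (x x' : X) (y y' : Y) (d d' : D) :
    addXW actD actW (addXW actD actW (x, (y, 0)) (0, (0, d))) (x', (y', d')) =
      (x + actW (y, d) x', (y + actD d y', d + d')) := by
  simp only [addXW, addYD, hD0, hW0', zero_add, add_zero]

end

theorem stmt16_general {X Y D : Type*} [AddZeroClass X] [AddZeroClass Y] [AddZeroClass D]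
    (actD : D → Y → Y)
    (hD0 : ∀ y : Y, actD 0 y = y)
    (actW : Y × D → X → X)
    (hW0' : ∀ w : Y × D, actW w 0 = 0) :
    (∀ (x x' : X) (y y' : Y) (d d' : D),
        addXW actD actW (x, (y, 0)) (addXW actD actW (0, (0, d)) (x', (y', d'))) =
          addXW actD actW (addXW actD actW (x, (y, 0)) (0, (0, d))) (x', (y', d'))) ↔
    (∀ (x : X) (y : Y) (d : D), actW (y, 0) (actW (0, d) x) = actW (y, d) x) := by
  simp only [addXW_addXW_right actD actW hD0, addXW_addXW_left actD actW hD0 hW0', Prod.mk.injEq,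
    and_true]
  refine ⟨fun h x y d => ?_, fun h x x' y y' d d' => by rw [h]⟩
  simpa only [zero_add] using h 0 x y 0 d 0

/-- Lemma 3.3 (b) ⇔ (c): the partial associativity identity
`(x,(y,0)) + ((0,(0,d)) + (x',(y',d'))) = ((x,(y,0)) + (0,(0,d))) + (x',(y',d'))`
holds in `X ⋊ (Y ⋊ D)` for all elements iff `(y,0)·((0,d)·x) = (y,d)·x` for all
`x ∈ X`, `y ∈ Y`, `d ∈ D`. -/
theorem stmt16 {X Y D : Type*} [AddZeroClass X] [AddZeroClass Y] [AddZeroClass D]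
    (actD : D → Y → Y)
    (hD0 : ∀ y : Y, actD 0 y = y) (hD0' : ∀ d : D, actD d 0 = 0)
    (actW : Y × D → X → X)
    (hW0 : ∀ x : X, actW (0, 0) x = x) (hW0' : ∀ w : Y × D, actW w 0 = 0) :
    (∀ (x x' : X) (y y' : Y) (d d' : D),
        addXW actD actW (x, (y, 0)) (addXW actD actW (0, (0, d)) (x', (y', d'))) =
          addXW actD actW (addXW actD actW (x, (y, 0)) (0, (0, d))) (x', (y', d'))) ↔
    (∀ (x : X) (y : Y) (d : D), actW (y, 0) (actW (0, d) x) = actW (y, d) x) :=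
  stmt16_general actD hD0 actW hW0'
end

section
/- Let D act on Y and Y ⋊ D act on X (actions of unitary magmas). Then the induced operation of D on X ⋊ (Y × {0}) ≅ X ⋊ Y, given by d·(x,y) = ((0,d)·x, d·y), together with the iterated semidirect product structure, satisfies the counterparts of the split-extension axioms (11)-(14), (16), (17): in particular ν'μ' = 1, (γα)(βδ) = 1, ν'βδ = 0, γαμ' = 0, μ'ν'(a) + βδγα(a) = a, ν'(μ'(x,(y,0)) + βδ(d)) = (x,(y,0)), and the two partial associativity laws μ'(x',(y',0)) + ((x,(y,d)) + βδ(d')) = (μ'(x',(y',0)) + (x,(y,d))) + βδ(d') and (x,(y,d)) + (μ'(x',(y',0)) + βδ(d')) = ((x,(y,d)) + μ'(x',(y',0))) + βδ(d'), where μ' : X ⋊ (Y × {0}) → X ⋊ (Y ⋊ D) is inclusion, ν'(x,(y,d)) = (x,(y,0)), α(x,(y,d)) = (y,d), β(y,d) = (0,(y,d)), γ(y,d) = d, δ(d) = (0,d). -/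
/-- Addition on `X ⋊ Y` (i.e. `X ⋊ (Y × {0})`), where `Y` acts on `X` by
restriction of the action of `Y ⋊ D`: `(x,y)+(x',y') = (x + (y,0)·x', y + y')`. -/
def addXY {X Y D : Type*} [AddZeroClass X] [AddZeroClass Y] [AddZeroClass D]
    (actW : Y × D → X → X) (p q : X × Y) : X × Y :=
  (p.1 + actW (p.2, 0) q.1, p.2 + q.2)

section

variable {X Y D : Type*} [AddZeroClass X] [AddZeroClass Y] [AddZeroClass D]
  {actD : D → Y → Y} {actW : Y × D → X → X}

theorem addYD_zero_fst (hD0' : ∀ d : D, actD d 0 = 0) (p : Y × D) (d : D) :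
    addYD actD p (0, d) = (p.1, p.2 + d) := by
  simp only [addYD, hD0', add_zero]

theorem addXW_zero_zero (hD0' : ∀ d : D, actD d 0 = 0) (hW0' : ∀ w : Y × D, actW w 0 = 0)
    (a : X × (Y × D)) (d : D) :
    addXW actD actW a (0, (0, d)) = (a.1, (a.2.1, a.2.2 + d)) := by
  simp only [addXW, addYD_zero_fst hD0', hW0', add_zero]

theorem addXW_assoc_zero_zero (hD0' : ∀ d : D, actD d 0 = 0)
    (hW0' : ∀ w : Y × D, actW w 0 = 0) (a b : X × (Y × D)) (d : D)
    (hassoc : a.2.2 + (b.2.2 + d) = a.2.2 + b.2.2 + d) :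
    addXW actD actW a (addXW actD actW b (0, (0, d))) =
      addXW actD actW (addXW actD actW a b) (0, (0, d)) := by
  simp only [addXW_zero_zero hD0' hW0']
  simp only [addXW, addYD, hassoc]

end

theorem stmt17_general {X Y D : Type*} [AddZeroClass X] [AddZeroClass Y] [AddZeroClass D]
    (actD : D → Y → Y)
    (hD0' : ∀ d : D, actD d 0 = 0)
    (actW : Y × D → X → X)
    (hW0' : ∀ w : Y × D, actW w 0 = 0) :
    let mu' : X × Y → X × (Y × D) := fun z => (z.1, (z.2, 0))
    let nu' : X × (Y × D) → X × Y := fun a => (a.1, a.2.1)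
    let al : X × (Y × D) → Y × D := fun a => a.2
    let be : Y × D → X × (Y × D) := fun w => ((0 : X), w)
    let ga : Y × D → D := fun w => w.2
    let de : D → Y × D := fun d => ((0 : Y), d)
    -- (29): ν'μ' = 1 and (γα)(βδ) = 1
    (∀ z : X × Y, nu' (mu' z) = z) ∧
    (∀ d : D, ga (al (be (de d))) = d) ∧
    -- (30): ν'βδ = 0 and γαμ' = 0
    (∀ d : D, nu' (be (de d)) = ((0 : X), (0 : Y))) ∧
    (∀ z : X × Y, ga (al (mu' z)) = 0) ∧
    -- (31): μ'ν' + βδγα = 1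
    (∀ a : X × (Y × D), addXW actD actW (mu' (nu' a)) (be (de (ga (al a)))) = a) ∧
    -- (32): ν'(μ'(x,(y,0)) + βδ(d)) = (x,(y,0))
    (∀ (z : X × Y) (d : D), nu' (addXW actD actW (mu' z) (be (de d))) = z) ∧
    -- (33): μ'(x',(y',0)) + ((x,(y,d)) + βδ(d')) = (μ'(x',(y',0)) + (x,(y,d))) + βδ(d')
    (∀ (z : X × Y) (a : X × (Y × D)) (d' : D),
      addXW actD actW (mu' z) (addXW actD actW a (be (de d'))) =
        addXW actD actW (addXW actD actW (mu' z) a) (be (de d'))) ∧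
    -- (34): (x,(y,d)) + (μ'(x',(y',0)) + βδ(d')) = ((x,(y,d)) + μ'(x',(y',0))) + βδ(d')
    (∀ (a : X × (Y × D)) (z : X × Y) (d' : D),
      addXW actD actW a (addXW actD actW (mu' z) (be (de d'))) =
        addXW actD actW (addXW actD actW a (mu' z)) (be (de d'))) := by
  intro mu' nu' al be ga de
  refine ⟨fun _ => rfl, fun _ => rfl, fun _ => rfl, fun _ => rfl, ?_, ?_, ?_, ?_⟩
  · rintro ⟨x, y, d⟩
    simp only [mu', nu', al, be, ga, de, addXW_zero_zero hD0' hW0', zero_add]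
  · rintro ⟨x, y⟩ d
    simp only [mu', nu', be, de, addXW_zero_zero hD0' hW0', zero_add]
  · intro z a d'
    exact addXW_assoc_zero_zero hD0' hW0' _ _ d' (by simp only [mu', zero_add])
  · intro a z d'
    exact addXW_assoc_zero_zero hD0' hW0' _ _ d' (by simp only [mu', zero_add, add_zero])

/-- Lemma 3.2: the seven-tuple
`(D, X ⋊ (Y × {0}), X ⋊ (Y ⋊ D), γα, βδ, μ', ν')` satisfies the counterparts of
the split-extension equalities (11)-(14), (16), (17). Here `X ⋊ (Y × {0}) ≅ X ⋊ Y`,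
`μ'(x,y) = (x,(y,0))`, `ν'(x,(y,d)) = (x,(y,0))`, `α(x,w) = w`, `β(w) = (0,w)`,
`γ(y,d) = d`, `δ(d) = (0,d)`. -/
theorem stmt17 {X Y D : Type*} [AddZeroClass X] [AddZeroClass Y] [AddZeroClass D]
    (actD : D → Y → Y)
    (hD0 : ∀ y : Y, actD 0 y = y) (hD0' : ∀ d : D, actD d 0 = 0)
    (actW : Y × D → X → X)
    (hW0 : ∀ x : X, actW (0, 0) x = x) (hW0' : ∀ w : Y × D, actW w 0 = 0) :
    let mu' : X × Y → X × (Y × D) := fun z => (z.1, (z.2, 0))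
    let nu' : X × (Y × D) → X × Y := fun a => (a.1, a.2.1)
    let al : X × (Y × D) → Y × D := fun a => a.2
    let be : Y × D → X × (Y × D) := fun w => ((0 : X), w)
    let ga : Y × D → D := fun w => w.2
    let de : D → Y × D := fun d => ((0 : Y), d)
    -- (29): ν'μ' = 1 and (γα)(βδ) = 1
    (∀ z : X × Y, nu' (mu' z) = z) ∧
    (∀ d : D, ga (al (be (de d))) = d) ∧
    -- (30): ν'βδ = 0 and γαμ' = 0
    (∀ d : D, nu' (be (de d)) = ((0 : X), (0 : Y))) ∧
    (∀ z : X × Y, ga (al (mu' z)) = 0) ∧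
    -- (31): μ'ν' + βδγα = 1
    (∀ a : X × (Y × D), addXW actD actW (mu' (nu' a)) (be (de (ga (al a)))) = a) ∧
    -- (32): ν'(μ'(x,(y,0)) + βδ(d)) = (x,(y,0))
    (∀ (z : X × Y) (d : D), nu' (addXW actD actW (mu' z) (be (de d))) = z) ∧
    -- (33): μ'(x',(y',0)) + ((x,(y,d)) + βδ(d')) = (μ'(x',(y',0)) + (x,(y,d))) + βδ(d')
    (∀ (z : X × Y) (a : X × (Y × D)) (d' : D),
      addXW actD actW (mu' z) (addXW actD actW a (be (de d'))) =
        addXW actD actW (addXW actD actW (mu' z) a) (be (de d'))) ∧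
    -- (34): (x,(y,d)) + (μ'(x',(y',0)) + βδ(d')) = ((x,(y,d)) + μ'(x',(y',0))) + βδ(d')
    (∀ (a : X × (Y × D)) (z : X × Y) (d' : D),
      addXW actD actW a (addXW actD actW (mu' z) (be (de d'))) =
        addXW actD actW (addXW actD actW a (mu' z)) (be (de d'))) :=
  stmt17_general actD hD0' actW hW0'
end

section
/- Let D act on Y and Y ⋊ D act on X, with both actions firm: d'·(d·y) = (d'+d)·y for all d,d' ∈ D, y ∈ Y, and w'·(w·x) = (w'+w)·x for all w,w' ∈ Y ⋊ D, x ∈ X. Then the induced action of D on X ⋊ Y given by d·(x,y) = ((0,d)·x, d·y) is firm: d'·(d·(x,y)) = (d'+d)·(x,y) for all d,d' ∈ D, x ∈ X, y ∈ Y. -/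
theorem addYD_zero_zero {Y D : Type*} [AddZeroClass Y] [AddZeroClass D]
    {actD : D → Y → Y} (hD0' : ∀ d : D, actD d 0 = 0) (d d' : D) :
    addYD actD (0, d') (0, d) = (0, d' + d) := by
  simp only [addYD, hD0', add_zero]

theorem stmt18_general {X Y D : Type*} [AddZeroClass X] [AddZeroClass Y] [AddZeroClass D]
    (actD : D → Y → Y)
    (hD0' : ∀ d : D, actD d 0 = 0)
    (hDfirm : ∀ (d d' : D) (y : Y), actD d' (actD d y) = actD (d' + d) y)
    (actW : Y × D → X → X)
    (hWfirm : ∀ (w w' : Y × D) (x : X),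
      actW w' (actW w x) = actW (addYD actD w' w) x) :
    let actZ : D → X × Y → X × Y := fun d z => (actW ((0 : Y), d) z.1, actD d z.2)
    ∀ (d d' : D) (z : X × Y), actZ d' (actZ d z) = actZ (d' + d) z := by
  intro actZ d d' z
  simp only [actZ, hWfirm, hDfirm, addYD_zero_zero hD0']

/-- Theorem 3.7: if the action of `D` on `Y` and the action of `Y ⋊ D` on `X`
are both firm, then the induced action of `D` on `X ⋊ Y`, given by
`d·(x,y) = ((0,d)·x, d·y)`, is firm. -/
theorem stmt18 {X Y D : Type*} [AddZeroClass X] [AddZeroClass Y] [AddZeroClass D]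
    (actD : D → Y → Y)
    (hD0 : ∀ y : Y, actD 0 y = y) (hD0' : ∀ d : D, actD d 0 = 0)
    (hDfirm : ∀ (d d' : D) (y : Y), actD d' (actD d y) = actD (d' + d) y)
    (actW : Y × D → X → X)
    (hW0 : ∀ x : X, actW (0, 0) x = x) (hW0' : ∀ w : Y × D, actW w 0 = 0)
    (hWfirm : ∀ (w w' : Y × D) (x : X),
      actW w' (actW w x) = actW (addYD actD w' w) x) :
    let actZ : D → X × Y → X × Y := fun d z => (actW ((0 : Y), d) z.1, actD d z.2)
    ∀ (d d' : D) (z : X × Y), actZ d' (actZ d z) = actZ (d' + d) z :=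
  stmt18_general actD hD0' hDfirm actW hWfirm
end

section
/- Let D act on Y and Y ⋊ D act on X, with both actions firm and distributive: d·(y+y') = d·y + d·y' for all d ∈ D, y,y' ∈ Y, and w·(x+x') = w·x + w·x' for all w ∈ Y ⋊ D, x,x' ∈ X. Then the induced action of D on X ⋊ Y given by d·(x,y) = ((0,d)·x, d·y) is distributive: d·((x,y)+(x',y')) = d·(x,y) + d·(x',y') for all d ∈ D, x,x' ∈ X, y,y' ∈ Y. -/
section

variable {X Y D : Type*} [AddZeroClass Y] [AddZeroClass D] {actD : D → Y → Y}

theorem addYD_inr_inl (hD0' : ∀ d : D, actD d 0 = 0) (d : D) (y : Y) :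
    addYD actD (0, d) (y, 0) = addYD actD (actD d y, 0) (0, d) := by
  simp only [addYD, hD0', zero_add, add_zero]

theorem actW_inr_actW_inl {actW : Y × D → X → X} (hD0' : ∀ d : D, actD d 0 = 0)
    (hWfirm : ∀ (w w' : Y × D) (x : X), actW w' (actW w x) = actW (addYD actD w' w) x)
    (d : D) (y : Y) (x : X) :
    actW (0, d) (actW (y, 0) x) = actW (actD d y, 0) (actW (0, d) x) := by
  rw [hWfirm, hWfirm, addYD_inr_inl hD0']

end

theorem stmt19_general {X Y D : Type*} [AddZeroClass X] [AddZeroClass Y] [AddZeroClass D]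
    (actD : D → Y → Y)
    (hD0' : ∀ d : D, actD d 0 = 0)
    (hDdist : ∀ (d : D) (y y' : Y), actD d (y + y') = actD d y + actD d y')
    (actW : Y × D → X → X)
    (hWfirm : ∀ (w w' : Y × D) (x : X),
      actW w' (actW w x) = actW (addYD actD w' w) x)
    (hWdist : ∀ (w : Y × D) (x x' : X), actW w (x + x') = actW w x + actW w x') :
    let actZ : D → X × Y → X × Y := fun d z => (actW ((0 : Y), d) z.1, actD d z.2)
    ∀ (d : D) (z z' : X × Y),
      actZ d (addXY actW z z') = addXY actW (actZ d z) (actZ d z') := by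
  intro actZ d z z'
  refine Prod.ext ?_ (hDdist d z.2 z'.2)
  change actW (0, d) (z.1 + actW (z.2, 0) z'.1)
    = actW (0, d) z.1 + actW (actD d z.2, 0) (actW (0, d) z'.1)
  rw [hWdist, actW_inr_actW_inl hD0' hWfirm]

/-- Subsection 4.3(c): if the action of `D` on `Y` and the action of `Y ⋊ D`
on `X` are both firm and distributive, then the induced action of `D` on
`X ⋊ Y`, `d·(x,y) = ((0,d)·x, d·y)`, is distributive. -/
theorem stmt19 {X Y D : Type*} [AddZeroClass X] [AddZeroClass Y] [AddZeroClass D]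
    (actD : D → Y → Y)
    (hD0 : ∀ y : Y, actD 0 y = y) (hD0' : ∀ d : D, actD d 0 = 0)
    (hDfirm : ∀ (d d' : D) (y : Y), actD d' (actD d y) = actD (d' + d) y)
    (hDdist : ∀ (d : D) (y y' : Y), actD d (y + y') = actD d y + actD d y')
    (actW : Y × D → X → X)
    (hW0 : ∀ x : X, actW (0, 0) x = x) (hW0' : ∀ w : Y × D, actW w 0 = 0)
    (hWfirm : ∀ (w w' : Y × D) (x : X),
      actW w' (actW w x) = actW (addYD actD w' w) x)
    (hWdist : ∀ (w : Y × D) (x x' : X), actW w (x + x') = actW w x + actW w x') :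
    let actZ : D → X × Y → X × Y := fun d z => (actW ((0 : Y), d) z.1, actD d z.2)
    ∀ (d : D) (z z' : X × Y),
      actZ d (addXY actW z z') = addXY actW (actZ d z) (actZ d z') :=
  stmt19_general actD hD0' hDdist actW hWfirm hWdist
end
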